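/- arXiv:1110.4594 — 2 statements merged into one kernel-verified Lean document; each statement's English description precedes it below -/
import Mathlib

section
/- Let a < b be real numbers, I = Icc a b, A ∈ ℝ with A ≠ 0, and let τ, f : ℝ → ℝ be differentiable on I with τ(t) > 0 and A·τ(t)³ − 1 ≠ 0 for all t ∈ I. Suppose f(t)²·(A·τ(t)³ − 1) = 9·A·τ(t)³ for all t ∈ I. Then for every t ∈ I one has f(t) ≠ 0 and f(t)² ≠ 9, and f satisfies the differential equation f′(t) = (1/6)·(9·f(t) − f(t)³)·(τ′(t)/τ(t)). -/
open Set

/-! Differentiating the first integral `Φ = f²(Aτ³ − 1) − 9Aτ³` gives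
`2ff'(Aτ³ − 1) + 3Aτ²τ'(f² − 9) = 0`, since `Φ` vanishes on an interval, where derivatives are
unique. On the level set `Φ = 0` one has `Aτ³ = f²/(f² − 9)` and `Aτ³ − 1 = 9/(f² − 9)`, so this
equation solves to `f' = (1/6)(9f − f³)τ'/τ`. -/

section Algebra

variable {K : Type*} [Field K] [CharZero K] {A x y x' y' : K}

theorem ne_zero_of_first_integral (hA : A ≠ 0) (hy : y ≠ 0)
    (h : x ^ 2 * (A * y ^ 3 - 1) = 9 * A * y ^ 3) : x ≠ 0 := by
  rintro rfl
  have : 9 * A * y ^ 3 ≠ 0 := by simp [hA, hy]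
  exact this (by simpa using h.symm)

theorem sq_ne_nine_of_first_integral (h : x ^ 2 * (A * y ^ 3 - 1) = 9 * A * y ^ 3) :
    x ^ 2 ≠ 9 := by
  intro h9
  rw [h9] at h
  have : (9 : K) = 0 := by linear_combination -h
  norm_num at this

theorem eq_of_first_integral_of_deriv (hA : A ≠ 0) (hy : y ≠ 0)
    (h : x ^ 2 * (A * y ^ 3 - 1) = 9 * A * y ^ 3)
    (hd : 2 * x * x' * (A * y ^ 3 - 1) + 3 * A * y ^ 2 * y' * (x ^ 2 - 9) = 0) :
    x' = 1 / 6 * (9 * x - x ^ 3) * (y' / y) := by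
  have hx := ne_zero_of_first_integral hA hy h
  have key : x * (6 * x' * y) = x * ((9 * x - x ^ 3) * y') := by
    linear_combination (x ^ 2 - 9) * y / 3 * hd - (2 / 3 * x * x' * y + y' * (x ^ 2 - 9)) * h
  field_simp
  linear_combination mul_left_cancel₀ hx key

end Algebra

theorem hasDerivWithinAt_first_integral {𝕜 : Type*} [NontriviallyNormedField 𝕜] {A : 𝕜}
    {f τ : 𝕜 → 𝕜} {f' τ' t : 𝕜} {s : Set 𝕜}
    (hf : HasDerivWithinAt f f' s t) (hτ : HasDerivWithinAt τ τ' s t) :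
    HasDerivWithinAt (fun u => f u ^ 2 * (A * τ u ^ 3 - 1) - 9 * A * τ u ^ 3)
      (2 * f t * f' * (A * τ t ^ 3 - 1) + 3 * A * τ t ^ 2 * τ' * (f t ^ 2 - 9)) s t := by
  refine (((hf.fun_pow 2).mul (((hτ.fun_pow 3).const_mul A).sub_const 1)).sub
    ((hτ.fun_pow 3).const_mul (9 * A))).congr_deriv ?_
  push_cast
  ring

theorem ode_of_first_integral_general (a b : ℝ) (hab : a < b) (A : ℝ) (hA : A ≠ 0)
    (τ f τ' f' : ℝ → ℝ)
    (hτ : ∀ t ∈ Icc a b, HasDerivWithinAt τ (τ' t) (Icc a b) t)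
    (hf : ∀ t ∈ Icc a b, HasDerivWithinAt f (f' t) (Icc a b) t)
    (hτpos : ∀ t ∈ Icc a b, 0 < τ t)
    (hrel : ∀ t ∈ Icc a b, f t ^ 2 * (A * τ t ^ 3 - 1) = 9 * A * τ t ^ 3) :
    ∀ t ∈ Icc a b, f t ≠ 0 ∧ f t ^ 2 ≠ 9 ∧
      f' t = (1 / 6) * (9 * f t - f t ^ 3) * (τ' t / τ t) := by
  intro t ht
  have hτ0 : τ t ≠ 0 := (hτpos t ht).ne'
  have hΦ : EqOn (fun u => f u ^ 2 * (A * τ u ^ 3 - 1) - 9 * A * τ u ^ 3) 0 (Icc a b) :=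
    fun u hu => sub_eq_zero.mpr (hrel u hu)
  have hd := (uniqueDiffOn_Icc hab t ht).eq_deriv _
    (hasDerivWithinAt_first_integral (hf t ht) (hτ t ht))
    ((hasDerivWithinAt_const t _ 0).congr hΦ (hΦ ht))
  exact ⟨ne_zero_of_first_integral hA hτ0 (hrel t ht), sq_ne_nine_of_first_integral (hrel t ht),
    eq_of_first_integral_of_deriv hA hτ0 (hrel t ht) hd⟩

/-- Converse to separation of variables: a differentiable function `f` with
`f²·(A·τ³ − 1) = 9·A·τ³` for a nonzero constant `A` is nowhere `0`, has
`f² ≠ 9` everywhere, and satisfies the ODE `f′ = (1/6)(9f − f³)·τ′/τ`. -/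
theorem ode_of_first_integral (a b : ℝ) (hab : a < b) (A : ℝ) (hA : A ≠ 0)
    (τ f τ' f' : ℝ → ℝ)
    (hτ : ∀ t ∈ Icc a b, HasDerivWithinAt τ (τ' t) (Icc a b) t)
    (hf : ∀ t ∈ Icc a b, HasDerivWithinAt f (f' t) (Icc a b) t)
    (hτpos : ∀ t ∈ Icc a b, 0 < τ t)
    (hAτ : ∀ t ∈ Icc a b, A * τ t ^ 3 - 1 ≠ 0)
    (hrel : ∀ t ∈ Icc a b, f t ^ 2 * (A * τ t ^ 3 - 1) = 9 * A * τ t ^ 3) :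
    ∀ t ∈ Icc a b, f t ≠ 0 ∧ f t ^ 2 ≠ 9 ∧
      f' t = (1 / 6) * (9 * f t - f t ^ 3) * (τ' t / τ t) :=
  ode_of_first_integral_general a b hab A hA τ f τ' f' hτ hf hτpos hrel
end

section
/- Let a < b be real numbers, I = Icc a b, and let τ : ℝ → ℝ be continuously differentiable on I with τ(t) > 0 for all t ∈ I. Let f : ℝ → ℝ be differentiable on I with f′(t) = (1/6)·(9·f(t) − f(t)³)·(τ′(t)/τ(t)) for all t ∈ I. Then exactly one of the following holds: (i) f(t) = 0 for all t ∈ I; (ii) f(t) = 3 for all t ∈ I; (iii) f(t) = −3 for all t ∈ I; or (iv) f(t) ∉ {0, 3, −3} for all t ∈ I and there exists a constant A ∈ ℝ, A ≠ 0, such that f(t)²·(A·τ(t)³ − 1) = 9·A·τ(t)³ for all t ∈ I. -/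
/-!
With `k = (9 - f²)τ'/(3τ)`, both `f²` and `(f² - 9)τ³` solve the scalar linear equation
`y' = k y`, and they never vanish together. For two such solutions `P, Q` the projective point
`[P : Q]` is locally constant (near a point where `Q ≠ 0` the quotient `P / Q` has derivative
zero, and symmetrically), hence constant on the interval. So
`f(x)²(f(y)² - 9)τ(y)³ = f(y)²(f(x)² - 9)τ(x)³` for all `x, y`, and the four cases are read off
from it; the sign of `f` in the cases `f² ≡ 9` is fixed by connectedness.
-/

open Set Filter Topology

theorem Convex.is_const_of_hasDerivWithinAt_zero {s : Set ℝ} (hs : Convex ℝ s) {g : ℝ → ℝ}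
    (hg : ∀ x ∈ s, HasDerivWithinAt g 0 s x) {x y : ℝ} (hx : x ∈ s) (hy : y ∈ s) :
    g x = g y := by
  have := hs.norm_image_sub_le_of_norm_hasDerivWithin_le hg (fun _ _ => norm_zero.le) hx hy
  rw [zero_mul, norm_le_zero_iff, sub_eq_zero] at this
  exact this.symm

theorem hasDerivWithinAt_div_zero_of_hasDerivWithinAt_mul {𝕜 : Type*} [NontriviallyNormedField 𝕜]
    {P Q k : 𝕜 → 𝕜} {s : Set 𝕜} {t : 𝕜}
    (hP : HasDerivWithinAt P (k t * P t) s t) (hQ : HasDerivWithinAt Q (k t * Q t) s t)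
    (hQt : Q t ≠ 0) : HasDerivWithinAt (fun x => P x / Q x) 0 s t :=
  (hP.div hQ hQt).congr_deriv (by rw [div_eq_zero_iff]; left; ring)

theorem Convex.eventually_mul_eq_mul_of_hasDerivWithinAt_mul {s : Set ℝ} (hs : Convex ℝ s)
    {P Q k : ℝ → ℝ} (hP : ∀ t ∈ s, HasDerivWithinAt P (k t * P t) s t)
    (hQ : ∀ t ∈ s, HasDerivWithinAt Q (k t * Q t) s t) {x : ℝ} (hx : x ∈ s) (hQx : Q x ≠ 0) :
    ∀ᶠ y in 𝓝[s] x, P x * Q y = P y * Q x := by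
  obtain ⟨ε, hε, hball⟩ := Metric.mem_nhdsWithin_iff.mp
    ((hQ x hx).continuousWithinAt.eventually_ne hQx)
  set u := Metric.ball x ε ∩ s
  have hu : Convex ℝ u := (convex_ball x ε).inter hs
  have hxu : x ∈ u := ⟨Metric.mem_ball_self hε, hx⟩
  have hconst : ∀ y ∈ u, P y / Q y = P x / Q x := fun y hy =>
    hu.is_const_of_hasDerivWithinAt_zero (fun z hz =>
      hasDerivWithinAt_div_zero_of_hasDerivWithinAt_mul ((hP z hz.2).mono inter_subset_right)
        ((hQ z hz.2).mono inter_subset_right) (hball hz)) hy hxu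
  filter_upwards [inter_mem_nhdsWithin s (Metric.ball_mem_nhds x hε)] with y hy
  have := hconst y ⟨hy.2, hy.1⟩
  rw [div_eq_div_iff (hball ⟨hy.2, hy.1⟩) hQx] at this
  linear_combination -this

theorem mul_eq_mul_trans {R : Type*} [CommRing R] [IsDomain R] {p₁ q₁ p₂ q₂ p₃ q₃ : R} (h₂ : p₂ ≠ 0 ∨ q₂ ≠ 0)
    (h₁₂ : p₁ * q₂ = p₂ * q₁) (h₂₃ : p₂ * q₃ = p₃ * q₂) : p₁ * q₃ = p₃ * q₁ := by
  rcases h₂ with hp | hq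
  · exact mul_left_cancel₀ hp (by linear_combination p₁ * h₂₃ + p₃ * h₁₂)
  · exact mul_left_cancel₀ hq (by linear_combination q₃ * h₁₂ + q₁ * h₂₃)

theorem Convex.mul_eq_mul_of_hasDerivWithinAt_mul {s : Set ℝ} (hs : Convex ℝ s)
    {P Q k : ℝ → ℝ} (hP : ∀ t ∈ s, HasDerivWithinAt P (k t * P t) s t)
    (hQ : ∀ t ∈ s, HasDerivWithinAt Q (k t * Q t) s t) (hPQ : ∀ t ∈ s, P t ≠ 0 ∨ Q t ≠ 0)
    {x y : ℝ} (hx : x ∈ s) (hy : y ∈ s) : P x * Q y = P y * Q x := by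
  refine hs.isPreconnected.induction₂ (fun x y => P x * Q y = P y * Q x) (fun z hz => ?_)
    (fun _ y _ _ hy _ => mul_eq_mul_trans (hPQ y hy)) (fun _ _ _ _ => Eq.symm) hx hy
  rcases hPQ z hz with hPz | hQz
  · filter_upwards [hs.eventually_mul_eq_mul_of_hasDerivWithinAt_mul hQ hP hz hPz] with y hy
    linear_combination -hy
  · exact hs.eventually_mul_eq_mul_of_hasDerivWithinAt_mul hP hQ hz hQz

section Ode

variable {f τ τ' : ℝ → ℝ} {s : Set ℝ} {t : ℝ}

theorem HasDerivWithinAt.sq_of_ode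
    (hf : HasDerivWithinAt f ((1 / 6) * (9 * f t - f t ^ 3) * (τ' t / τ t)) s t) :
    HasDerivWithinAt (fun x => f x ^ 2) ((9 - f t ^ 2) * τ' t / (3 * τ t) * f t ^ 2) s t :=
  (hf.pow 2).congr_deriv (by ring)

theorem HasDerivWithinAt.sq_sub_mul_pow_of_ode
    (hf : HasDerivWithinAt f ((1 / 6) * (9 * f t - f t ^ 3) * (τ' t / τ t)) s t)
    (hτ : HasDerivWithinAt τ (τ' t) s t) :
    HasDerivWithinAt (fun x => (f x ^ 2 - 9) * τ x ^ 3)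
      ((9 - f t ^ 2) * τ' t / (3 * τ t) * ((f t ^ 2 - 9) * τ t ^ 3)) s t :=
  (((hf.pow 2).sub_const 9).mul (hτ.pow 3)).congr_deriv <| by
    simp only [Pi.pow_apply]
    rcases eq_or_ne (τ t) 0 with hτt | hτt
    · simp [hτt]
    · field_simp
      ring

theorem Convex.sq_mul_eq_of_ode (hs : Convex ℝ s) (hτ : ∀ t ∈ s, HasDerivWithinAt τ (τ' t) s t)
    (hτ₀ : ∀ t ∈ s, τ t ≠ 0)
    (hf : ∀ t ∈ s, HasDerivWithinAt f ((1 / 6) * (9 * f t - f t ^ 3) * (τ' t / τ t)) s t)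
    {x y : ℝ} (hx : x ∈ s) (hy : y ∈ s) :
    f x ^ 2 * ((f y ^ 2 - 9) * τ y ^ 3) = f y ^ 2 * ((f x ^ 2 - 9) * τ x ^ 3) :=
  hs.mul_eq_mul_of_hasDerivWithinAt_mul (fun t ht => (hf t ht).sq_of_ode)
    (fun t ht => (hf t ht).sq_sub_mul_pow_of_ode (hτ t ht))
    (fun t ht => by by_cases h : f t = 0 <;> simp [h, hτ₀ t ht]) hx hy

end Ode

theorem ode_solution_classification_general (a b : ℝ) (τ f τ' : ℝ → ℝ)
    (hτ : ∀ t ∈ Icc a b, HasDerivWithinAt τ (τ' t) (Icc a b) t)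
    (hτpos : ∀ t ∈ Icc a b, 0 < τ t)
    (hf : ∀ t ∈ Icc a b,
      HasDerivWithinAt f ((1 / 6) * (9 * f t - f t ^ 3) * (τ' t / τ t)) (Icc a b) t) :
    (∀ t ∈ Icc a b, f t = 0) ∨ (∀ t ∈ Icc a b, f t = 3) ∨
    (∀ t ∈ Icc a b, f t = -3) ∨
    ((∀ t ∈ Icc a b, f t ≠ 0 ∧ f t ≠ 3 ∧ f t ≠ -3) ∧
      ∃ A : ℝ, A ≠ 0 ∧
        ∀ t ∈ Icc a b, f t ^ 2 * (A * τ t ^ 3 - 1) = 9 * A * τ t ^ 3) := by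
  have hcross {x y : ℝ} (hx : x ∈ Icc a b) (hy : y ∈ Icc a b) :=
    (convex_Icc a b).sq_mul_eq_of_ode hτ (fun t ht => (hτpos t ht).ne') hf hx hy
  by_cases h0 : ∃ t₀ ∈ Icc a b, f t₀ = 0
  · obtain ⟨t₀, ht₀, hft₀⟩ := h0
    refine Or.inl fun t ht => ?_
    have := hcross ht ht₀
    simp_all [(hτpos t₀ ht₀).ne']
  by_cases h3 : ∃ t₀ ∈ Icc a b, f t₀ ^ 2 = 9
  · obtain ⟨t₀, ht₀, hft₀⟩ := h3
    have hsq : EqOn (f ^ 2) (fun _ => f t₀ ^ 2) (Icc a b) := fun t ht => by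
      have := hcross ht₀ ht
      simp_all [(hτpos t ht).ne', sub_eq_zero]
    have hconst : EqOn f (fun _ => f t₀) (Icc a b) :=
      isPreconnected_Icc.eq_of_sq_eq (fun t ht => (hf t ht).continuousWithinAt)
        continuousOn_const hsq (fun _ => by simp_all) ht₀ rfl
    rcases sq_eq_sq_iff_eq_or_eq_neg.mp (hft₀.trans (by norm_num : (9 : ℝ) = 3 ^ 2)) with h | h
    · exact Or.inr (Or.inl fun t ht => (hconst ht).trans h)
    · exact Or.inr (Or.inr (Or.inl fun t ht => (hconst ht).trans h))
  push Not at h0 h3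
  obtain hI | ⟨t₀, ht₀⟩ := (Icc a b).eq_empty_or_nonempty
  · simp [hI]
  have h9 : f t₀ ^ 2 - 9 ≠ 0 := sub_ne_zero.mpr (h3 t₀ ht₀)
  have hτ₀ : τ t₀ ≠ 0 := (hτpos t₀ ht₀).ne'
  refine Or.inr (Or.inr (Or.inr ⟨fun t ht => ⟨h0 t ht, fun h => h3 t ht (by norm_num [h]),
    fun h => h3 t ht (by norm_num [h])⟩, f t₀ ^ 2 / ((f t₀ ^ 2 - 9) * τ t₀ ^ 3),
    div_ne_zero (pow_ne_zero 2 (h0 t₀ ht₀)) (mul_ne_zero h9 (pow_ne_zero 3 hτ₀)),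
    fun t ht => ?_⟩))
  field_simp
  linear_combination hcross ht₀ ht

/-- Classification of the solutions of the ODE `f′ = (1/6)(9f − f³)·τ′/τ`
(with `τ` positive and `C¹`): `f` is identically `0`, identically `3`,
identically `−3`, or nowhere in `{0, 3, −3}` and given implicitly by
`f²·(A·τ³ − 1) = 9·A·τ³` for some nonzero constant `A`. -/
theorem ode_solution_classification (a b : ℝ) (hab : a < b) (τ f τ' : ℝ → ℝ)
    (hτ : ∀ t ∈ Icc a b, HasDerivWithinAt τ (τ' t) (Icc a b) t)
    (hτ' : ContinuousOn τ' (Icc a b))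
    (hτpos : ∀ t ∈ Icc a b, 0 < τ t)
    (hf : ∀ t ∈ Icc a b,
      HasDerivWithinAt f ((1 / 6) * (9 * f t - f t ^ 3) * (τ' t / τ t)) (Icc a b) t) :
    (∀ t ∈ Icc a b, f t = 0) ∨ (∀ t ∈ Icc a b, f t = 3) ∨
    (∀ t ∈ Icc a b, f t = -3) ∨
    ((∀ t ∈ Icc a b, f t ≠ 0 ∧ f t ≠ 3 ∧ f t ≠ -3) ∧
      ∃ A : ℝ, A ≠ 0 ∧
        ∀ t ∈ Icc a b, f t ^ 2 * (A * τ t ^ 3 - 1) = 9 * A * τ t ^ 3) :=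
  ode_solution_classification_general a b τ f τ' hτ hτpos hf
end
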